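/- Let x = (xₙ) ∈ c₀(ℂ_p) satisfy x_k ≠ 0 for all k ≥ k₀ and max_{j≥1} |x_{k+j}|_p / |x_k|_p → 0 as k → ∞. Then x is a cyclic vector for the backward shift T, i.e., the closed linear span of {x, Tx, T²x, …} equals c₀. -/

import Mathlib

open Filter Topology ZeroAtInfty Finset

/-- The backward shift `(x₀,x₁,…) ↦ (x₁,x₂,…)` on `c₀`. -/
noncomputable def bshiftC0 {K : Type*} [NormedField K] (x : C₀(ℕ, K)) : C₀(ℕ, K) where
  toFun := fun n => x (n + 1)
  continuous_toFun := continuous_of_discreteTopology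
  zero_at_infty' := by
    rw [cocompact_eq_atTop (α := ℕ)]
    refine (tendsto_add_atTop_iff_nat 1).mpr ?_
    have h := x.zero_at_infty'
    rw [cocompact_eq_atTop (α := ℕ)] at h
    exact h

/-!
The normalised shifts `(x (k + n))⁻¹ • T^[k] x` have `n`-th coordinate `1`, and all their later
coordinates are bounded by `⨆ j, ‖x (k + n + 1 + j)‖ / ‖x (k + n)‖ → 0`. Subtracting their first
`n` coordinates, which lie in the closed span by induction on `n`, gives a sequence in the closed
span converging to the unit vector `eₙ`. Finally the unit vectors span a dense subspace of `c₀`.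
-/

namespace ZeroAtInftyContinuousMap

variable {α β : Type*} [TopologicalSpace α]

theorem coe_sum [AddCommMonoid β] [TopologicalSpace β] [ContinuousAdd β] {ι : Type*}
    (s : Finset ι) (f : ι → C₀(α, β)) : ⇑(∑ i ∈ s, f i) = ∑ i ∈ s, ⇑(f i) :=
  map_sum (⟨⟨fun g : C₀(α, β) => ⇑g, coe_zero⟩, coe_add⟩ : C₀(α, β) →+ (α → β)) f s

variable [SeminormedAddCommGroup β]

theorem norm_le {f : C₀(α, β)} {C : ℝ} (hC : 0 ≤ C) : ‖f‖ ≤ C ↔ ∀ x, ‖f x‖ ≤ C :=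
  BoundedContinuousFunction.norm_le (f := f.toBCF) hC

theorem norm_coe_le_norm (f : C₀(α, β)) (x : α) : ‖f x‖ ≤ ‖f‖ :=
  f.toBCF.norm_coe_le_norm x

end ZeroAtInftyContinuousMap

section UnitVectors

variable (K : Type*) [NormedField K]

noncomputable def c0Single (i : ℕ) : C₀(ℕ, K) where
  toFun n := if n = i then 1 else 0
  continuous_toFun := continuous_of_discreteTopology
  zero_at_infty' := by
    rw [cocompact_eq_atTop (α := ℕ)]
    exact tendsto_const_nhds.congr' <| (eventually_gt_atTop i).mono fun n hn => by simp [hn.ne']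

@[simp]
theorem c0Single_apply (i n : ℕ) : c0Single K i n = if n = i then 1 else 0 := rfl

variable {K}

theorem sum_range_smul_c0Single_apply (f : C₀(ℕ, K)) (N m : ℕ) :
    (∑ i ∈ range N, f i • c0Single K i) m = if m < N then f m else 0 := by
  simp [ZeroAtInftyContinuousMap.coe_sum, Finset.sum_apply]

theorem norm_sub_sum_range_smul_c0Single_le (f : C₀(ℕ, K)) (N : ℕ) {C : ℝ} (hC : 0 ≤ C)
    (hf : ∀ m, N ≤ m → ‖f m‖ ≤ C) : ‖f - ∑ i ∈ range N, f i • c0Single K i‖ ≤ C := by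
  refine (ZeroAtInftyContinuousMap.norm_le hC).2 fun m => ?_
  rw [ZeroAtInftyContinuousMap.sub_apply, sum_range_smul_c0Single_apply]
  split_ifs with hm
  · simpa using hC
  · simpa using hf m (not_lt.1 hm)

theorem tendsto_sum_range_smul_c0Single (f : C₀(ℕ, K)) :
    Tendsto (fun N => ∑ i ∈ range N, f i • c0Single K i) atTop (𝓝 f) := by
  have hf : Tendsto (fun m => ‖f m‖) atTop (𝓝 0) := by
    simpa [cocompact_eq_atTop (α := ℕ)] using f.zero_at_infty'.norm
  rw [tendsto_iff_norm_sub_tendsto_zero]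
  refine tendsto_order.2 ⟨fun a ha => Eventually.of_forall fun _ => ha.trans_le (norm_nonneg _),
    fun ε hε => ?_⟩
  obtain ⟨N₀, hN₀⟩ := eventually_atTop.1 ((tendsto_order.1 hf).2 (ε / 2) (half_pos hε))
  filter_upwards [eventually_ge_atTop N₀] with N hN
  rw [norm_sub_rev]
  exact (norm_sub_sum_range_smul_c0Single_le f N (half_pos hε).le
    fun m hm => (hN₀ m (hN.trans hm)).le).trans_lt (half_lt_self hε)

theorem eq_top_of_forall_c0Single_mem (S : Submodule K C₀(ℕ, K)) (hS : IsClosed (S : Set C₀(ℕ, K)))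
    (h : ∀ i, c0Single K i ∈ S) : S = ⊤ :=
  eq_top_iff.2 fun f _ => hS.mem_of_tendsto (tendsto_sum_range_smul_c0Single f) <|
    Eventually.of_forall fun _ => S.sum_mem fun i _ => S.smul_mem _ (h i)

/-- The inductive step: `u k` minus its first `n` coordinates converges to `eₙ`. -/
theorem c0Single_mem_of_tendsto_tail {ι : Type*} {l : Filter ι} [l.NeBot]
    (S : Submodule K C₀(ℕ, K)) (hS : IsClosed (S : Set C₀(ℕ, K))) (n : ℕ)
    (hlt : ∀ i < n, c0Single K i ∈ S) (u : ι → C₀(ℕ, K)) (hu : ∀ k, u k ∈ S)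
    (hun : ∀ᶠ k in l, u k n = 1) (r : ι → ℝ) (hr : Tendsto r l (𝓝 0))
    (htail : ∀ k, ∀ m, n < m → ‖u k m‖ ≤ r k) : c0Single K n ∈ S := by
  set v := fun k => u k - ∑ i ∈ range n, u k i • c0Single K i
  have hv : ∀ k, v k ∈ S := fun k =>
    S.sub_mem (hu k) (S.sum_mem fun i hi => S.smul_mem _ (hlt i (mem_range.1 hi)))
  have hv_sub : ∀ᶠ k in l, v k - c0Single K n = u k - ∑ i ∈ range (n + 1), u k i • c0Single K i :=
    hun.mono fun k hk => by simp only [v, sum_range_succ, hk, one_smul, sub_sub]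
  have hlim : Tendsto v l (𝓝 (c0Single K n)) := by
    rw [tendsto_iff_norm_sub_tendsto_zero]
    refine squeeze_zero_norm' (hv_sub.mono fun k hk => ?_) hr
    rw [hk, norm_norm]
    exact norm_sub_sum_range_smul_c0Single_le _ _
      ((norm_nonneg _).trans (htail k (n + 1) n.lt_succ_self)) fun m hm => htail k m hm
  exact hS.mem_of_tendsto hlim (Eventually.of_forall hv)

end UnitVectors

theorem bshiftC0_iterate_apply {K : Type*} [NormedField K] (k : ℕ) (x : C₀(ℕ, K)) (m : ℕ) :
    (bshiftC0^[k] x) m = x (m + k) := by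
  induction k generalizing x with
  | zero => rfl
  | succ k ih => rw [Function.iterate_succ_apply, ih]; exact congrArg x (by omega)

theorem norm_apply_div_le_iSup {K : Type*} [NormedField K] (x : C₀(ℕ, K)) (k j : ℕ) :
    ‖x (k + 1 + j)‖ / ‖x k‖ ≤ ⨆ i : ℕ, ‖x (k + 1 + i)‖ / ‖x k‖ :=
  le_ciSup ⟨‖x‖ / ‖x k‖, Set.forall_mem_range.2 fun _ =>
    div_le_div_of_nonneg_right (x.norm_coe_le_norm _) (norm_nonneg _)⟩ j

theorem cyclic_vector_criterion_general
    (K : Type*) [NontriviallyNormedField K]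
    (x : C₀(ℕ, K)) (k₀ : ℕ) (hx : ∀ k, k₀ ≤ k → x k ≠ 0)
    (hratio : Tendsto (fun k : ℕ => ⨆ j : ℕ, ‖x (k + 1 + j)‖ / ‖x k‖)
      atTop (𝓝 0)) :
    (Submodule.span K (Set.range fun n : ℕ => bshiftC0^[n] x)).topologicalClosure
      = ⊤ := by
  set S := (Submodule.span K (Set.range fun n : ℕ => bshiftC0^[n] x)).topologicalClosure
  have hS : IsClosed (S : Set C₀(ℕ, K)) := Submodule.isClosed_topologicalClosure _
  refine eq_top_of_forall_c0Single_mem S hS fun n => ?_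
  induction n using Nat.strong_induction_on with
  | _ n ih =>
  refine c0Single_mem_of_tendsto_tail S hS n ih (fun k => (x (k + n))⁻¹ • bshiftC0^[k] x)
    (fun k => S.smul_mem _ (Submodule.le_topologicalClosure _ (Submodule.subset_span ⟨k, rfl⟩)))
    ?_ _ (hratio.comp (tendsto_add_atTop_nat n)) fun k m hm => ?_
  · filter_upwards [eventually_ge_atTop k₀] with k hk
    simp [bshiftC0_iterate_apply, add_comm n k, hx (k + n) (hk.trans (k.le_add_right n))]
  · obtain ⟨j, rfl⟩ := Nat.exists_eq_add_of_lt hm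
    simpa [bshiftC0_iterate_apply, div_eq_inv_mul, add_comm, add_left_comm, add_assoc]
      using norm_apply_div_le_iSup x (k + n) j

/-- If `x = (xₙ) ∈ c₀` satisfies `x_k ≠ 0` for all `k ≥ k₀` and
`max_{j≥1} ‖x_{k+j}‖/‖x_k‖ → 0` as `k → ∞`, then `x` is a cyclic vector for the
backward shift `T`: the closed linear span of `{x, Tx, T²x, …}` is all of `c₀`. -/
theorem cyclic_vector_criterion
    (p : ℕ) [Fact p.Prime] (K : Type*) [NontriviallyNormedField K]
    [IsAlgClosed K] [CompleteSpace K] [IsUltrametricDist K] [Algebra ℚ_[p] K]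
    (hK : ∀ q : ℚ_[p], ‖algebraMap ℚ_[p] K q‖ = ‖q‖)
    (x : C₀(ℕ, K)) (k₀ : ℕ) (hx : ∀ k, k₀ ≤ k → x k ≠ 0)
    (hratio : Tendsto (fun k : ℕ => ⨆ j : ℕ, ‖x (k + 1 + j)‖ / ‖x k‖)
      atTop (𝓝 0)) :
    (Submodule.span K (Set.range fun n : ℕ => bshiftC0^[n] x)).topologicalClosure
      = ⊤ :=
  cyclic_vector_criterion_general K x k₀ hx hratio
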